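/- arXiv:1904.10059 — 6 statements merged into one kernel-verified Lean document; each statement's English description precedes it below -/
import Mathlib

section
/- Let S ≥ 1 be a natural number, τ > 0, and let a_1, …, a_S be real constants. Let ê_1, …, ê_S, g_1, …, g_S be jointly independent real random variables on a probability space with ê_s Gaussian with mean 0 and variance τ² and g_s Gaussian with mean 0 and variance τ²/S. Define e_s = ê_s − (1/S)·∑_{s'=1}^S ê_{s'} and â_s = a_s + e_s + g_s, and let a_cape = (1/S)·∑_{s=1}^S â_s. Then Var(a_cape) = τ²/S². In particular, a_cape has exactly the noise variance τ_pool² = (τ/S)² of the pooled-data Gaussian mechanism. -/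
open MeasureTheory ProbabilityTheory Real Set
open scoped NNReal ENNReal

section AuxGauss

lemma aux_integrable_sq_exp {b : ℝ} (hb : 0 < b) :
    Integrable (fun x : ℝ => x ^ 2 * Real.exp (-b * x ^ 2)) := by
  have h := integrable_rpow_mul_exp_neg_mul_sq hb (s := 2) (by norm_num)
  simpa [Real.rpow_two] using h

lemma aux_integral_sq_exp {b : ℝ} (hb : 0 < b) :
    ∫ x : ℝ, x ^ 2 * Real.exp (-b * x ^ 2) = Real.sqrt π / 2 * b ^ (-(3:ℝ)/2) := by
  have hIoi : ∫ x in Ioi (0:ℝ), x ^ 2 * Real.exp (-b * x ^ 2)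
      = b ^ (-(3:ℝ)/2) * (Real.sqrt π / 4) := by
    have h := integral_rpow_mul_exp_neg_mul_rpow (p := 2) (q := 2) (b := b)
      two_pos (by norm_num) hb
    rw [show ((2:ℝ)+1)/2 = 1/2 + 1 by norm_num, Real.Gamma_add_one (by norm_num),
      Real.Gamma_one_half_eq] at h
    rw [show (-((2:ℝ)+1)/2 : ℝ) = -(3:ℝ)/2 by norm_num] at h
    calc ∫ x in Ioi (0:ℝ), x ^ 2 * Real.exp (-b * x ^ 2)
        = ∫ x in Ioi (0:ℝ), x ^ (2:ℝ) * Real.exp (-b * x ^ (2:ℝ)) := by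
          refine setIntegral_congr_fun measurableSet_Ioi (fun x hx => ?_)
          rw [Real.rpow_two]
      _ = b ^ (-(3:ℝ)/2) * (1/2) * ((1/2) * Real.sqrt π) := h
      _ = b ^ (-(3:ℝ)/2) * (Real.sqrt π / 4) := by ring
  have hint := aux_integrable_sq_exp hb
  have hsplit := integral_add_compl (measurableSet_Ioi (a := (0:ℝ))) hint
  rw [compl_Ioi] at hsplit
  have hIic : ∫ x in Iic (0:ℝ), x ^ 2 * Real.exp (-b * x ^ 2)
      = ∫ x in Ioi (0:ℝ), x ^ 2 * Real.exp (-b * x ^ 2) := by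
    have h := integral_comp_neg_Ioi (0:ℝ) (fun x => x ^ 2 * Real.exp (-b * x ^ 2))
    simp only [neg_zero, neg_sq] at h
    exact h.symm
  rw [hIic] at hsplit
  rw [← hsplit, hIoi]; ring

lemma aux_gauss_integral {v : ℝ≥0} (hv : v ≠ 0) (f : ℝ → ℝ) :
    ∫ x, f x ∂(gaussianReal 0 v) = ∫ x, gaussianPDFReal 0 v x * f x := by
  rw [gaussianReal_of_var_ne_zero 0 hv]
  have hmeas : Measurable (fun x => (gaussianPDFReal 0 v x).toNNReal) :=
    (measurable_gaussianPDFReal 0 v).real_toNNReal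
  have : gaussianPDF 0 v = fun x => ((gaussianPDFReal 0 v x).toNNReal : ℝ≥0∞) := rfl
  rw [this, integral_withDensity_eq_integral_smul hmeas f]
  congr 1
  funext x
  rw [NNReal.smul_def, smul_eq_mul, Real.coe_toNNReal _ (gaussianPDFReal_nonneg 0 v x)]

lemma aux_pdf_eq {v : ℝ≥0} :
    (fun x : ℝ => gaussianPDFReal 0 v x * x ^ 2)
      = fun x : ℝ => (Real.sqrt (2 * π * v))⁻¹ * (x ^ 2 * Real.exp (-(2 * (v:ℝ))⁻¹ * x ^ 2)) := by
  funext x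
  rw [gaussianPDFReal]
  rw [show -(x - 0)^2/(2*(v:ℝ)) = -(2*(v:ℝ))⁻¹ * x^2 by ring]
  ring

lemma aux_gauss_mean {v : ℝ≥0} (hv : v ≠ 0) : ∫ x, x ∂(gaussianReal 0 v) = 0 := by
  rw [aux_gauss_integral hv]
  set F : ℝ → ℝ := fun x => gaussianPDFReal 0 v x * x with hF
  have hodd : ∀ x, F (-x) = - F x := by
    intro x
    simp only [hF, gaussianPDFReal]
    rw [show (-x - 0)^2 = (x - 0)^2 by ring]
    ring
  have h := integral_neg_eq_self F (volume : Measure ℝ)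
  have h2 : ∫ x, F (-x) = - ∫ x, F x := by
    simp_rw [hodd]; exact integral_neg F
  rw [h2] at h
  linarith

lemma aux_gauss_sq {v : ℝ≥0} (hv : v ≠ 0) :
    ∫ x, x ^ 2 ∂(gaussianReal 0 v) = v := by
  have hw : 0 < (v:ℝ) := lt_of_le_of_ne v.coe_nonneg (by exact_mod_cast hv.symm)
  have hb : 0 < (2 * (v:ℝ))⁻¹ := by positivity
  rw [aux_gauss_integral hv (fun x => x ^ 2)]
  calc ∫ x, gaussianPDFReal 0 v x * x ^ 2
      = ∫ x, (Real.sqrt (2 * π * v))⁻¹ * (x ^ 2 * Real.exp (-(2 * (v:ℝ))⁻¹ * x ^ 2)) := by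
        rw [aux_pdf_eq]
    _ = (Real.sqrt (2 * π * v))⁻¹ * ∫ x, x ^ 2 * Real.exp (-(2 * (v:ℝ))⁻¹ * x ^ 2) :=
        integral_const_mul _ _
    _ = (Real.sqrt (2 * π * v))⁻¹ * (Real.sqrt π / 2 * ((2 * (v:ℝ))⁻¹) ^ (-(3:ℝ)/2)) := by
        rw [aux_integral_sq_exp hb]
    _ = (v:ℝ) := by
        rw [Real.inv_rpow (by positivity), ← Real.rpow_neg (by positivity), neg_div, neg_neg]
        rw [show ((3:ℝ)/2) = 1 + 1/2 by norm_num, Real.rpow_add (by positivity), Real.rpow_one,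
          ← Real.sqrt_eq_rpow]
        rw [show 2 * π * (v:ℝ) = π * (2 * (v:ℝ)) by ring, Real.sqrt_mul pi_pos.le]
        have h1 : Real.sqrt π ≠ 0 := by positivity
        have h2 : Real.sqrt (2 * (v:ℝ)) ≠ 0 := by positivity
        field_simp

lemma aux_integrable_sq_gauss {v : ℝ≥0} (hv : v ≠ 0) :
    Integrable (fun x : ℝ => x ^ 2) (gaussianReal 0 v) := by
  have hw : 0 < (v:ℝ) := lt_of_le_of_ne v.coe_nonneg (by exact_mod_cast hv.symm)
  rw [gaussianReal_of_var_ne_zero 0 hv]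
  have hmeas : Measurable (fun x => (gaussianPDFReal 0 v x).toNNReal) :=
    (measurable_gaussianPDFReal 0 v).real_toNNReal
  have : gaussianPDF 0 v = fun x => ((gaussianPDFReal 0 v x).toNNReal : ℝ≥0∞) := rfl
  rw [this, integrable_withDensity_iff_integrable_smul hmeas]
  have heq : (fun x : ℝ => ((gaussianPDFReal 0 v x).toNNReal : ℝ) • (x ^ 2))
      = fun x : ℝ => gaussianPDFReal 0 v x * x ^ 2 := by
    funext x
    rw [smul_eq_mul, Real.coe_toNNReal _ (gaussianPDFReal_nonneg 0 v x)]
  rw [show (fun x : ℝ => ((gaussianPDFReal 0 v x).toNNReal) • (x ^ 2)) =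
      fun x : ℝ => gaussianPDFReal 0 v x * x ^ 2 from heq, aux_pdf_eq]
  exact (aux_integrable_sq_exp (by positivity)).const_mul _

variable {Ω : Type*} [MeasureSpace Ω] [IsProbabilityMeasure (ℙ : Measure Ω)]

omit [IsProbabilityMeasure (ℙ : Measure Ω)] in
lemma aux_gauss_memℒp {X : Ω → ℝ} {v : ℝ≥0}
    (hX : Measurable X) (hmap : Measure.map X ℙ = gaussianReal 0 v) (hv : v ≠ 0) :
    MemLp X 2 ℙ := by
  rw [memLp_two_iff_integrable_sq hX.aestronglyMeasurable]
  have h := aux_integrable_sq_gauss hv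
  rw [← hmap] at h
  exact (integrable_map_measure (by fun_prop) hX.aemeasurable).mp h

lemma aux_gauss_variance {X : Ω → ℝ} {v : ℝ≥0}
    (hX : Measurable X) (hmap : Measure.map X ℙ = gaussianReal 0 v) (hv : v ≠ 0) :
    variance X ℙ = v := by
  rw [variance_eq_sub (aux_gauss_memℒp hX hmap hv)]
  have h1 : (∫ ω, X ω ∂ℙ) = 0 := by
    have := integral_map (μ := ℙ) hX.aemeasurable (f := fun x : ℝ => x)
      measurable_id.aestronglyMeasurable
    rw [hmap] at this
    rw [← this, aux_gauss_mean hv]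
  have h2 : (∫ ω, X ω ^ 2 ∂ℙ) = (v : ℝ) := by
    have := integral_map (μ := ℙ) hX.aemeasurable (f := fun x : ℝ => x ^ 2)
      (measurable_id.pow_const 2).aestronglyMeasurable
    rw [hmap] at this
    rw [← this, aux_gauss_sq hv]
  have e1 : ℙ[X] = (0:ℝ) := h1
  have e2 : ℙ[X ^ 2] = (v : ℝ) := h2
  rw [e1, e2]; ring

lemma aux_variance_const_add (c : ℝ) (Y : Ω → ℝ) (hY : Integrable Y ℙ) :
    variance (fun ω => c + Y ω) ℙ = variance Y ℙ := by
  have hmean : ℙ[fun ω => c + Y ω] = c + ℙ[Y] := by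
    rw [integral_add (integrable_const c) hY, integral_const]; simp
  simp only [variance, evariance, hmean]
  congr 1
  apply lintegral_congr
  intro ω
  congr 2
  ring_nf

end AuxGauss

/-- **Lemma 1 (utility of CAPE, symmetric setting).**
Each site `s` releases `â_s = a_s + e_s + g_s` with `e_s = ê_s - (1/S)∑ ê`, where the
`ê_s ~ N(0, τ²)` and `g_s ~ N(0, τ²/S)` are jointly independent.  The aggregator output
`a_cape = (1/S)∑ â_s` has variance exactly `τ²/S² = τ_pool²`. -/
theorem stmt_0 {Ω : Type*} [MeasureSpace Ω] [IsProbabilityMeasure (ℙ : Measure Ω)]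
    (S : ℕ) (hS : 1 ≤ S) (τ : ℝ) (hτ : 0 < τ) (a : Fin S → ℝ)
    (ehat g : Fin S → Ω → ℝ)
    (hmeas_e : ∀ s, Measurable (ehat s)) (hmeas_g : ∀ s, Measurable (g s))
    (hindep : iIndepFun
      (Sum.elim ehat g) ℙ)
    (hehat : ∀ s, Measure.map (ehat s) ℙ = gaussianReal 0 ⟨τ ^ 2, sq_nonneg τ⟩)
    (hg : ∀ s, Measure.map (g s) ℙ
      = gaussianReal 0 ⟨τ ^ 2 / S, by positivity⟩) :
    variance
      (fun ω => (S : ℝ)⁻¹ *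
        ∑ s, (a s + (ehat s ω - (S : ℝ)⁻¹ * ∑ s', ehat s' ω) + g s ω)) ℙ
      = τ ^ 2 / S ^ 2 := by
  have hSpos : (0:ℝ) < S := by exact_mod_cast hS
  have hSne : (S:ℝ) ≠ 0 := ne_of_gt hSpos
  -- the variance parameter of the local noises
  set v : ℝ≥0 := ⟨τ ^ 2 / S, by positivity⟩ with hv_def
  have hv : v ≠ 0 := by
    have : (v : ℝ) = τ ^ 2 / S := rfl
    intro h
    rw [h] at this
    have : τ ^ 2 / (S:ℝ) = 0 := this.symm
    have hpos : 0 < τ ^ 2 / (S:ℝ) := div_pos (by positivity) hSpos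
    linarith
  -- ℒ² membership of the g's
  have hg_mem : ∀ s, MemLp (g s) 2 ℙ :=
    fun s => aux_gauss_memℒp (hmeas_g s) (hg s) hv
  -- the released average simplifies to a constant plus the average of the g's
  have hfun : (fun ω => (S : ℝ)⁻¹ *
        ∑ s, (a s + (ehat s ω - (S : ℝ)⁻¹ * ∑ s', ehat s' ω) + g s ω))
      = fun ω => ((S:ℝ)⁻¹ * ∑ s, a s) + (S:ℝ)⁻¹ * ∑ s, g s ω := by
    funext ω
    have h1 : ∑ _s : Fin S, ((S:ℝ)⁻¹ * ∑ s', ehat s' ω) = ∑ s', ehat s' ω := by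
      rw [Finset.sum_const, Finset.card_univ, Fintype.card_fin, nsmul_eq_mul]
      field_simp
    have h2 : ∑ s, (a s + (ehat s ω - (S:ℝ)⁻¹ * ∑ s', ehat s' ω) + g s ω)
        = ∑ s, a s + ∑ s, g s ω := by
      rw [Finset.sum_add_distrib, Finset.sum_add_distrib, Finset.sum_sub_distrib, h1]
      ring
    rw [h2]
    ring
  rw [hfun]
  -- drop the constant
  have hYint : Integrable (fun ω => (S:ℝ)⁻¹ * ∑ s, g s ω) ℙ := by
    apply Integrable.const_mul
    exact integrable_finset_sum _ (fun s _ => (hg_mem s).integrable one_le_two)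
  rw [aux_variance_const_add _ _ hYint]
  -- pull out the scalar
  rw [variance_const_mul]
  -- variance of the sum of independent Gaussians
  have hsum : variance (fun ω => ∑ s, g s ω) ℙ = ∑ s : Fin S, variance (g s) ℙ := by
    have hfn : (fun ω => ∑ s, g s ω) = ∑ s : Fin S, g s := by
      funext ω; simp
    rw [hfn]
    refine IndepFun.variance_sum (fun s _ => hg_mem s) ?_
    intro i _ j _ hij
    have hne : (Sum.inr i : Fin S ⊕ Fin S) ≠ Sum.inr j := by simpa using hij
    have := hindep.indepFun hne
    simpa using this
  rw [hsum]
  have hvar : ∀ s : Fin S, variance (g s) ℙ = τ ^ 2 / S :=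
    fun s => aux_gauss_variance (hmeas_g s) (hg s) hv
  rw [Finset.sum_congr rfl (fun s _ => hvar s), Finset.sum_const, Finset.card_univ,
    Fintype.card_fin, nsmul_eq_mul]
  field_simp
end

section
/- Let S ≥ 1 be a natural number, let Δ : ℝ → ℝ be a function such that x ↦ Δ(x)² is convex on the positive reals, let N_1, …, N_S be positive reals with ∑_{s=1}^S N_s = N, and suppose Δ(N/S) = S·Δ(N). Then ∑_{s=1}^S Δ(N_s)² ≥ S³·Δ(N)², with equality when N_s = N/S for all s. Consequently the ratio H(n) = (∑_{s=1}^S Δ(N_s)²)/(S³·Δ(N)²) of the CAPE aggregator noise variance to the pooled-data noise variance satisfies H(n) ≥ 1, and H(n) = 1 in the symmetric setting N_s = N/S. -/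
/-- **Proposition 2 (scope of CAPE, convex sensitivity).**
If `x ↦ Δ(x)²` is convex on the positive reals, the positive sample sizes `N_s` sum to
`N`, and `Δ(N/S) = S·Δ(N)`, then `∑ Δ(N_s)² ≥ S³·Δ(N)²`, with equality in the symmetric
setting `N_s = N/S`; consequently `H(n) = (∑ Δ(N_s)²)/(S³·Δ(N)²) ≥ 1`, with `H(n) = 1`
in the symmetric setting. -/
theorem stmt_6 (S : ℕ) (hS : 1 ≤ S) (Δ : ℝ → ℝ)
    (hconv : ConvexOn ℝ (Set.Ioi (0 : ℝ)) (fun x => (Δ x) ^ 2))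
    (N : ℝ) (Ns : Fin S → ℝ) (hpos : ∀ s, 0 < Ns s) (hsum : ∑ s, Ns s = N)
    (hΔ : Δ (N / S) = S * Δ N) :
    ((S : ℝ) ^ 3 * (Δ N) ^ 2 ≤ ∑ s, (Δ (Ns s)) ^ 2) ∧
    ((∀ s, Ns s = N / S) → ∑ s, (Δ (Ns s)) ^ 2 = (S : ℝ) ^ 3 * (Δ N) ^ 2) ∧
    (Δ N ≠ 0 → 1 ≤ (∑ s, (Δ (Ns s)) ^ 2) / ((S : ℝ) ^ 3 * (Δ N) ^ 2)) ∧
    (Δ N ≠ 0 → (∀ s, Ns s = N / S) →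
      (∑ s, (Δ (Ns s)) ^ 2) / ((S : ℝ) ^ 3 * (Δ N) ^ 2) = 1) := by
  have hSpos : (0 : ℝ) < S := by exact_mod_cast hS
  have hSne : (S : ℝ) ≠ 0 := ne_of_gt hSpos
  have hjensen : Δ (N / S) ^ 2 ≤ ∑ s, (1 / (S : ℝ)) • (Δ (Ns s)) ^ 2 := by
    have h := hconv.map_sum_le (t := Finset.univ) (w := fun _ : Fin S => 1 / (S : ℝ))
      (p := Ns) (fun i _ => by positivity)
      (by rw [Finset.sum_const]; simp [hSne])
      (fun i _ => hpos i)
    simpa [← Finset.sum_mul, hsum, div_eq_mul_inv, smul_eq_mul, mul_comm] using h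
  have hmain : (S : ℝ) ^ 3 * (Δ N) ^ 2 ≤ ∑ s, (Δ (Ns s)) ^ 2 := by
    have h2 : (S : ℝ) ^ 2 * (Δ N) ^ 2 ≤ (1 / S) * ∑ s, (Δ (Ns s)) ^ 2 := by
      have := hjensen
      rw [hΔ] at this
      simpa [mul_pow, Finset.mul_sum, smul_eq_mul] using this
    have := mul_le_mul_of_nonneg_left h2 (le_of_lt hSpos)
    calc (S : ℝ) ^ 3 * (Δ N) ^ 2 = S * ((S : ℝ) ^ 2 * (Δ N) ^ 2) := by ring
      _ ≤ S * ((1 / S) * ∑ s, (Δ (Ns s)) ^ 2) := this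
      _ = ∑ s, (Δ (Ns s)) ^ 2 := by field_simp
  have heq : (∀ s, Ns s = N / S) → ∑ s, (Δ (Ns s)) ^ 2 = (S : ℝ) ^ 3 * (Δ N) ^ 2 := by
    intro h
    simp only [h, hΔ, Finset.sum_const, Finset.card_univ, Fintype.card_fin, nsmul_eq_mul,
      mul_pow]
    ring
  refine ⟨hmain, heq, ?_, ?_⟩
  · intro hne
    have hpos' : (0 : ℝ) < (S : ℝ) ^ 3 * (Δ N) ^ 2 := by positivity
    rw [le_div_iff₀ hpos', one_mul]
    exact hmain
  · intro hne h
    have hpos' : ((S : ℝ) ^ 3 * (Δ N) ^ 2) ≠ 0 := by positivity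
    rw [heq h, div_self hpos']
end

section
/- Let S ≥ 1 be a natural number and let N_1, …, N_S be reals with N_s ≥ 1 for all s and ∑_{s=1}^S N_s = N (so N ≥ S). Then ∑_{s=1}^S 1/N_s² ≤ 1/(N − S + 1)² + (S − 1). Equivalently, the ratio H(n) = (N²/S³)·∑_{s=1}^S 1/N_s² satisfies H(n) ≤ (N²/S³)·(1/(N − S + 1)² + S − 1). -/
/-- Chord bound: for `1 ≤ x ≤ M`, `1/x² ≤ 1 + (x-1)·(1/M²-1)/(M-1)`. -/
lemma chord_bound (x M : ℝ) (hx : 1 ≤ x) (hxM : x ≤ M) :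
    1 / x ^ 2 ≤ 1 + (x - 1) * ((1 / M ^ 2 - 1) / (M - 1)) := by
  rcases eq_or_lt_of_le (hx.trans hxM) with h | h
  · have hx1 : x = 1 := le_antisymm (hxM.trans h.symm.le) hx
    simp [hx1]
  · have hx0 : (0:ℝ) < x := by linarith
    have hM0 : (0:ℝ) < M := by linarith
    have hM1 : M - 1 ≠ 0 := by intro hc; linarith
    rw [← sub_nonneg]
    have heq : 1 + (x - 1) * ((1 / M ^ 2 - 1) / (M - 1)) - 1 / x ^ 2
        = (x - 1) * (M - x) * (M * x + M + x) / (x ^ 2 * M ^ 2) := by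
      field_simp
      ring
    rw [heq]
    apply div_nonneg
    · apply mul_nonneg (mul_nonneg (by linarith) (by linarith))
      nlinarith
    · positivity

/-- **Upper bound on the CAPE noise ratio for averaging.**
If each `N_s ≥ 1` and `∑ N_s = N`, then `∑ 1/N_s² ≤ 1/(N-S+1)² + (S-1)`; equivalently
`H(n) = (N²/S³)·∑ 1/N_s² ≤ (N²/S³)·(1/(N-S+1)² + S-1)`. -/
theorem stmt_8 (S : ℕ) (hS : 1 ≤ S) (N : ℝ) (Ns : Fin S → ℝ)
    (h1 : ∀ s, 1 ≤ Ns s) (hsum : ∑ s, Ns s = N) :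
    (∑ s, 1 / (Ns s) ^ 2 ≤ 1 / (N - S + 1) ^ 2 + ((S : ℝ) - 1)) ∧
    ((N ^ 2 / (S : ℝ) ^ 3) * ∑ s, 1 / (Ns s) ^ 2
      ≤ (N ^ 2 / (S : ℝ) ^ 3) * (1 / (N - S + 1) ^ 2 + ((S : ℝ) - 1))) := by
  have hSN : (S : ℝ) ≤ N := by
    rw [← hsum]
    calc (S:ℝ) = ∑ _s : Fin S, (1:ℝ) := by simp
    _ ≤ ∑ s, Ns s := Finset.sum_le_sum fun s _ => h1 s
  set M := N - S + 1 with hMdef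
  have hM1 : 1 ≤ M := by rw [hMdef]; linarith
  have hNsM : ∀ s, Ns s ≤ M := by
    intro s
    have hins : s ∈ Finset.univ := Finset.mem_univ s
    have hsplit : Ns s + ∑ t ∈ Finset.univ.erase s, Ns t = N := by
      rw [← hsum, Finset.add_sum_erase _ _ hins]
    have hcard : ((Finset.univ : Finset (Fin S)).erase s).card = S - 1 := by
      simp [Finset.card_erase_of_mem]
    have hlow : (S:ℝ) - 1 ≤ ∑ t ∈ Finset.univ.erase s, Ns t := by
      have h2 := Finset.card_nsmul_le_sum (Finset.univ.erase s) Ns 1 (fun t _ => h1 t)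
      rw [hcard] at h2
      have h3 : ((S - 1 : ℕ) : ℝ) ≤ ∑ t ∈ Finset.univ.erase s, Ns t := by
        simpa using h2
      rw [Nat.cast_sub hS] at h3
      simpa using h3
    rw [hMdef]; linarith
  have key : ∑ s, 1 / (Ns s) ^ 2 ≤ 1 / M ^ 2 + ((S:ℝ) - 1) := by
    have hb : ∑ s, 1 / (Ns s) ^ 2
        ≤ ∑ s, (1 + (Ns s - 1) * ((1 / M ^ 2 - 1) / (M - 1))) :=
      Finset.sum_le_sum fun s _ => chord_bound (Ns s) M (h1 s) (hNsM s)
    have hsub : ∑ s, (Ns s - 1) = N - S := by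
      rw [Finset.sum_sub_distrib, hsum]; simp
    have heq : ∑ s, (1 + (Ns s - 1) * ((1 / M ^ 2 - 1) / (M - 1)))
        = (S:ℝ) + (N - S) * ((1 / M ^ 2 - 1) / (M - 1)) := by
      rw [Finset.sum_add_distrib, ← Finset.sum_mul, hsub]
      simp
    rw [heq] at hb
    have hNS : N - (S:ℝ) = M - 1 := by rw [hMdef]; ring
    rw [hNS] at hb
    rcases eq_or_lt_of_le hM1 with h | h
    · rw [← h] at hb ⊢
      simp at hb ⊢
      linarith
    · have hM0 : M - 1 ≠ 0 := by intro hc; linarith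
      rw [mul_comm, div_mul_cancel₀ _ hM0] at hb
      linarith
  refine ⟨key, ?_⟩
  apply mul_le_mul_of_nonneg_left key
  positivity
end

section
/- Let D ≥ 1 and let x, x' ∈ ℝᴰ with ‖x‖₂ ≤ 1 and ‖x'‖₂ ≤ 1. Then the Frobenius norm of the difference of outer products satisfies ‖x xᵀ − x' x'ᵀ‖_F ≤ √2, i.e., (∑_{d₁=1}^D ∑_{d₂=1}^D (x_{d₁} x_{d₂} − x'_{d₁} x'_{d₂})²)^{1/2} ≤ √2. -/
/-- **Frobenius bound for differences of outer products.**
If `‖x‖₂ ≤ 1` and `‖x'‖₂ ≤ 1` in `ℝᴰ`, then `‖x xᵀ - x' x'ᵀ‖_F ≤ √2`. -/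
theorem stmt_10 (D : ℕ) (hD : 1 ≤ D) (x x' : EuclideanSpace ℝ (Fin D))
    (hx : ‖x‖ ≤ 1) (hx' : ‖x'‖ ≤ 1) :
    Real.sqrt (∑ d₁, ∑ d₂, (x d₁ * x d₂ - x' d₁ * x' d₂) ^ 2) ≤ Real.sqrt 2 := by
  apply Real.sqrt_le_sqrt
  have key : ∑ d₁, ∑ d₂, (x d₁ * x d₂ - x' d₁ * x' d₂) ^ 2
      = (∑ d, x d ^ 2) * (∑ d, x d ^ 2) + (∑ d, x' d ^ 2) * (∑ d, x' d ^ 2)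
        - 2 * ((∑ d, x d * x' d) * (∑ d, x d * x' d)) := by
    have e : ∀ i j : Fin D, (x i * x j - x' i * x' j) ^ 2
        = x i ^ 2 * x j ^ 2 + x' i ^ 2 * x' j ^ 2 - 2 * ((x i * x' i) * (x j * x' j)) := by
      intro i j; ring
    simp only [e, Finset.sum_sub_distrib, Finset.sum_add_distrib, ← Finset.mul_sum,
      ← Finset.sum_mul]
  have hxs : ∑ d, x d ^ 2 ≤ 1 := by
    have h2 : Real.sqrt (∑ d, x d ^ 2) ≤ 1 := by
      rw [EuclideanSpace.norm_eq] at hx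
      simpa [Real.norm_eq_abs, sq_abs] using hx
    have h0x : (0:ℝ) ≤ ∑ d, x d ^ 2 := Finset.sum_nonneg fun i _ => sq_nonneg _
    nlinarith [Real.sq_sqrt h0x, Real.sqrt_nonneg (∑ d, x d ^ 2)]
  have hxs' : ∑ d, x' d ^ 2 ≤ 1 := by
    have h2 : Real.sqrt (∑ d, x' d ^ 2) ≤ 1 := by
      rw [EuclideanSpace.norm_eq] at hx'
      simpa [Real.norm_eq_abs, sq_abs] using hx'
    have h0x : (0:ℝ) ≤ ∑ d, x' d ^ 2 := Finset.sum_nonneg fun i _ => sq_nonneg _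
    nlinarith [Real.sq_sqrt h0x, Real.sqrt_nonneg (∑ d, x' d ^ 2)]
  have h0 : 0 ≤ ∑ d, x d ^ 2 := Finset.sum_nonneg fun i _ => sq_nonneg _
  have h0' : 0 ≤ ∑ d, x' d ^ 2 := Finset.sum_nonneg fun i _ => sq_nonneg _
  rw [key]
  nlinarith [sq_nonneg (∑ d, x d * x' d)]
end

section
/- Let N ≥ 1 and D ≥ 1 be natural numbers and let X and X' be real N × D matrices whose rows agree except possibly in one row n₀, and suppose the n₀-th rows x and x' of X and X' satisfy ‖x‖₂ ≤ 1 and ‖x'‖₂ ≤ 1. Then (1/N)·‖XᵀX − X'ᵀX'‖_F ≤ √2/N. -/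
open Matrix

/-- **Sensitivity `Δ₂ = √2/N` of `Λ₂ = XᵀX/N` (improved functional mechanism).**
If `X` and `X'` agree except possibly in row `n₀`, and the two `n₀`-th rows have
`ℓ₂`-norm at most 1, then `(1/N)·‖XᵀX - X'ᵀX'‖_F ≤ √2/N`. -/
theorem stmt_12 (N D : ℕ) (hN : 1 ≤ N) (hD : 1 ≤ D)
    (X X' : Matrix (Fin N) (Fin D) ℝ) (n₀ : Fin N)
    (hrow : ∀ n, n ≠ n₀ → X n = X' n)
    (hx : Real.sqrt (∑ d, (X n₀ d) ^ 2) ≤ 1)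
    (hx' : Real.sqrt (∑ d, (X' n₀ d) ^ 2) ≤ 1) :
    (1 / (N : ℝ)) * Real.sqrt (∑ i, ∑ j, ((Xᵀ * X - X'ᵀ * X') i j) ^ 2)
      ≤ Real.sqrt 2 / N := by
  set x : Fin D → ℝ := X n₀ with hxdef
  set x' : Fin D → ℝ := X' n₀ with hx'def
  set a : ℝ := ∑ d, (x d) ^ 2 with ha
  set b : ℝ := ∑ d, (x' d) ^ 2 with hb
  set c : ℝ := ∑ d, x d * x' d with hc
  have ha0 : 0 ≤ a := Finset.sum_nonneg fun i _ => sq_nonneg _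
  have hb0 : 0 ≤ b := Finset.sum_nonneg fun i _ => sq_nonneg _
  have ha1 : a ≤ 1 := by
    have := Real.sqrt_le_sqrt (le_of_eq (Real.sq_sqrt ha0).symm)
    nlinarith [Real.sq_sqrt ha0, hx, Real.sqrt_nonneg a]
  have hb1 : b ≤ 1 := by
    nlinarith [Real.sq_sqrt hb0, hx', Real.sqrt_nonneg b]
  have hentry : ∀ i j, (Xᵀ * X - X'ᵀ * X') i j = x i * x j - x' i * x' j := by
    intro i j
    simp only [Matrix.sub_apply, Matrix.mul_apply, Matrix.transpose_apply]
    rw [← Finset.sum_sub_distrib]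
    rw [Finset.sum_eq_single n₀]
    · intro n _ hn
      rw [hrow n hn]; ring
    · intro h; exact absurd (Finset.mem_univ n₀) h
  have hsum : ∑ i, ∑ j, ((Xᵀ * X - X'ᵀ * X') i j) ^ 2 = a ^ 2 + b ^ 2 - 2 * c ^ 2 := by
    have h1 : ∀ i, ∑ j, ((Xᵀ * X - X'ᵀ * X') i j) ^ 2
        = x i ^ 2 * a + x' i ^ 2 * b - (x i * x' i) * (2 * c) := by
      intro i
      rw [ha, hb, hc, Finset.mul_sum, Finset.mul_sum, Finset.mul_sum, Finset.mul_sum,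
        ← Finset.sum_add_distrib, ← Finset.sum_sub_distrib]
      refine Finset.sum_congr rfl fun j _ => ?_
      rw [hentry]; ring
    simp_rw [h1]
    rw [Finset.sum_sub_distrib, Finset.sum_add_distrib, ← Finset.sum_mul,
      ← Finset.sum_mul, ← Finset.sum_mul, ← ha, ← hb, ← hc]
    ring
  rw [hsum]
  have h2 : a ^ 2 + b ^ 2 - 2 * c ^ 2 ≤ 2 := by nlinarith [sq_nonneg c]
  have := Real.sqrt_le_sqrt h2
  have hNpos : (0:ℝ) < N := by exact_mod_cast hN
  rw [one_div, inv_mul_eq_div]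
  gcongr
end

section
/- Let D ≥ 1, let x, x' ∈ ℝᴰ with ‖x‖₂ ≤ 1 and ‖x'‖₂ ≤ 1, and let y, y' ∈ {0, 1}. Then ‖(1/2 − y)·x − (1/2 − y')·x'‖₂ ≤ 1; consequently, for neighboring datasets of size N differing in one labeled sample, the logistic regression coefficient vector Λ₁ = (1/N)·∑_{n=1}^N (1/2 − y_n)·x_n changes in ℓ₂-norm by at most 1/N. -/
/-- **Sensitivity `Δ₁ = 1/N` of `Λ₁` for logistic regression.**
If `‖x‖₂ ≤ 1`, `‖x'‖₂ ≤ 1` and `y, y' ∈ {0,1}`, then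
`‖(1/2 - y)x - (1/2 - y')x'‖₂ ≤ 1`; consequently, for neighboring datasets of size `N`
differing in one labeled sample, `Λ₁ = (1/N)∑ (1/2 - y_n)x_n` changes in `ℓ₂`-norm by
at most `1/N`. -/
theorem stmt_14 (D : ℕ) (hD : 1 ≤ D) (x x' : EuclideanSpace ℝ (Fin D))
    (hx : ‖x‖ ≤ 1) (hx' : ‖x'‖ ≤ 1)
    (y y' : ℝ) (hy : y ∈ ({0, 1} : Set ℝ)) (hy' : y' ∈ ({0, 1} : Set ℝ)) :
    ‖(1 / 2 - y) • x - (1 / 2 - y') • x'‖ ≤ 1 ∧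
    ∀ (N : ℕ), 1 ≤ N →
      ∀ (xs xs' : Fin N → EuclideanSpace ℝ (Fin D)) (ys ys' : Fin N → ℝ) (n₀ : Fin N),
        (∀ n, n ≠ n₀ → xs n = xs' n ∧ ys n = ys' n) →
        xs n₀ = x → xs' n₀ = x' → ys n₀ = y → ys' n₀ = y' →
        ‖(N : ℝ)⁻¹ • ∑ n, (1 / 2 - ys n) • xs n
            - (N : ℝ)⁻¹ • ∑ n, (1 / 2 - ys' n) • xs' n‖ ≤ 1 / N := by
  have hy2 : y = 0 ∨ y = 1 := by simpa using hy
  have hy2' : y' = 0 ∨ y' = 1 := by simpa using hy'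
  have habs : |1 / 2 - y| = 1 / 2 := by rcases hy2 with rfl | rfl <;> norm_num
  have habs' : |1 / 2 - y'| = 1 / 2 := by rcases hy2' with rfl | rfl <;> norm_num
  have key : ‖(1 / 2 - y) • x - (1 / 2 - y') • x'‖ ≤ 1 := by
    calc ‖(1 / 2 - y) • x - (1 / 2 - y') • x'‖
        ≤ ‖(1 / 2 - y) • x‖ + ‖(1 / 2 - y') • x'‖ := norm_sub_le _ _
      _ = |1 / 2 - y| * ‖x‖ + |1 / 2 - y'| * ‖x'‖ := by rw [norm_smul, norm_smul]; rfl
      _ ≤ (1 / 2) * 1 + (1 / 2) * 1 := by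
          rw [habs, habs']; gcongr <;> norm_num
      _ = 1 := by norm_num
  refine ⟨key, fun N hN xs xs' ys ys' n₀ hagree hx0 hx0' hy0 hy0' => ?_⟩
  have hsum : ∑ n, (1 / 2 - ys n) • xs n - ∑ n, (1 / 2 - ys' n) • xs' n
      = (1 / 2 - y) • x - (1 / 2 - y') • x' := by
    rw [← Finset.sum_sub_distrib]
    rw [Finset.sum_eq_single n₀]
    · rw [hx0, hx0', hy0, hy0']
    · intro n _ hn
      obtain ⟨h1, h2⟩ := hagree n hn
      rw [h1, h2, sub_self]
    · intro h; exact absurd (Finset.mem_univ n₀) h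
  have hNpos : (0 : ℝ) < N := by exact_mod_cast hN
  rw [← smul_sub, hsum, norm_smul, Real.norm_eq_abs, abs_inv, abs_of_pos hNpos]
  calc (N : ℝ)⁻¹ * ‖(1 / 2 - y) • x - (1 / 2 - y') • x'‖
      ≤ (N : ℝ)⁻¹ * 1 := by gcongr
    _ = 1 / N := by rw [mul_one, one_div]
end
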